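/- Every totally refinable compactly supported distribution φ on ℝ can be written as φ = D^m ψ, where m ≥ 0 is an integer and ψ is a totally refinable compactly supported distribution with ψ(1) ≠ 0 (equivalently, Fourier transform of ψ nonzero at 0). -/

import Mathlib

/-!
Let `J f = ∫₀ˣ f` and let `m` be the first index with `φ(xᵐ) ≠ 0`; it exists because a
compactly supported distribution of finite order that kills all polynomials is zero (approximate
`f⁽ᴺ⁾` uniformly by a polynomial and integrate back `N` times). Put `ψ = (-1)ᵐ φ ∘ Jᵐ`. Since
`Jᵐ f⁽ᵐ⁾` differs from `f` by its Taylor polynomial of degree `< m`, which `φ` kills, `Dᵐ ψ = φ`,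
and `ψ(1) = (-1)ᵐ φ(xᵐ) / m! ≠ 0`. Integration only costs a factor `Rᵐ` in the finite-order
estimate on `[-R, R]`, so `ψ` is compactly supported. Finally `Dᵐ` is injective and
`Dᵐ (T(p·-j)) = pᵐ (Dᵐ T)(p·-j)`, so a refinement equation for `φ` with coefficients `cⱼ`
yields one for `ψ` with coefficients `cⱼ / pᵐ`.
-/

open scoped Topology
open MeasureTheory

noncomputable section

/-- The space of infinitely differentiable functions `ℝ → ℝ`, as a submodule of `ℝ → ℝ`. -/
def SmoothR : Submodule ℝ (ℝ → ℝ) where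
  carrier := {f | ContDiff ℝ (⊤ : ℕ∞) f}
  add_mem' {f g} hf hg := by exact ContDiff.add (Set.mem_setOf_eq ▸ hf) (Set.mem_setOf_eq ▸ hg)
  zero_mem' := by exact (contDiff_const : ContDiff ℝ (⊤ : ℕ∞) fun _ : ℝ => (0:ℝ))
  smul_mem' c f hf := by
    have hf' : ContDiff ℝ (⊤ : ℕ∞) f := hf
    show ContDiff ℝ (⊤ : ℕ∞) (c • f)
    exact hf'.const_smul c

/-- Distributions: linear functionals on smooth functions. -/
abbrev DistR := SmoothR →ₗ[ℝ] ℝ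

/-- A distribution vanishes on an open set `U` if it kills every smooth function
supported in `U`. -/
def VanishesOn (T : DistR) (U : Set ℝ) : Prop :=
  ∀ f : SmoothR, tsupport (f : ℝ → ℝ) ⊆ U → T f = 0

/-- The support of a distribution: complement of the largest open set on which it vanishes. -/
def distSupp (T : DistR) : Set ℝ :=
  {x : ℝ | ¬ ∃ U : Set ℝ, IsOpen U ∧ x ∈ U ∧ VanishesOn T U}

/-- The continuity/compact support estimate characterizing members of `𝓔'(ℝ)`:
a compactly supported distribution of finite order. -/
def IsCompactDist (T : DistR) : Prop :=
  ∃ (K : Set ℝ) (C : ℝ) (N : ℕ), IsCompact K ∧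
    ∀ f : SmoothR, |T f| ≤ C * ⨆ (j : Fin (N + 1)) (x : K), |iteratedDeriv j (f : ℝ → ℝ) x|

/-- The monomial `x ↦ x ^ j` as a smooth function. -/
lemma mem_smoothR {f : ℝ → ℝ} : f ∈ SmoothR ↔ ContDiff ℝ (⊤ : ℕ∞) f := Iff.rfl

def monomialS (j : ℕ) : SmoothR := ⟨fun x => x ^ j, mem_smoothR.mpr (contDiff_id.pow j)⟩

def derivSmooth (f : SmoothR) : SmoothR :=
  ⟨deriv (f : ℝ → ℝ), mem_smoothR.mpr (contDiff_infty_iff_deriv.mp (mem_smoothR.mp f.2)).2⟩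

/-- Differentiation as a linear map on smooth functions. -/
def derivLM : SmoothR →ₗ[ℝ] SmoothR where
  toFun := derivSmooth
  map_add' f g := Subtype.ext (by
    funext x
    exact deriv_add (((mem_smoothR.mp f.2).differentiable (by simp)).differentiableAt)
      (((mem_smoothR.mp g.2).differentiable (by simp)).differentiableAt))
  map_smul' c f := Subtype.ext (by
    funext x
    exact deriv_const_smul c (((mem_smoothR.mp f.2).differentiable (by simp)).differentiableAt))

/-- Distributional derivative: `(D T) f = -T f'`. -/
def Dop (T : DistR) : DistR := -(T ∘ₗ derivLM)

/-- Iterated distributional derivative. -/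
def Dpow (m : ℕ) : DistR → DistR := Dop^[m]

/-- Precomposition of a smooth function with the affine map `x ↦ (x + h) / l`. -/
def affineMapS (l h : ℝ) (f : SmoothR) : SmoothR :=
  ⟨fun x => (f : ℝ → ℝ) ((x + h) / l),
    mem_smoothR.mpr ((mem_smoothR.mp f.2).comp ((contDiff_id.add contDiff_const).div_const l))⟩

def compAffine (l h : ℝ) : SmoothR →ₗ[ℝ] SmoothR where
  toFun := affineMapS l h
  map_add' f g := Subtype.ext rfl
  map_smul' c f := Subtype.ext rfl

/-- The affine pullback `φ(l·−h)` of a distribution `φ`, acting by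
`⟨φ(l·−h), f⟩ = |l|⁻¹ ⟨φ, f((·+h)/l)⟩`. -/
def affinePullD (l h : ℝ) (T : DistR) : DistR := |l|⁻¹ • (T ∘ₗ compAffine l h)

/-- The Dirac distribution at a point. -/
def diracD (a : ℝ) : DistR where
  toFun f := (f : ℝ → ℝ) a
  map_add' f g := rfl
  map_smul' c f := rfl

/-- `φ` is `p`-refinable: `φ = Σ_j c_j φ(p·−j)` for finitely many coefficients. -/
def IsRefinable (p : ℕ) (φ : DistR) : Prop :=
  ∃ (s : Finset ℤ) (c : ℤ → ℝ), φ = ∑ j ∈ s, c j • affinePullD (p : ℝ) (j : ℝ) φ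

/-- `φ` is totally refinable: it is nonzero and `p`-refinable for every integer `p ≥ 2`. -/
def TotallyRefinable (φ : DistR) : Prop :=
  φ ≠ 0 ∧ ∀ p : ℕ, 2 ≤ p → IsRefinable p φ

open Set

namespace SmoothR

lemma contDiff (f : SmoothR) : ContDiff ℝ (⊤ : ℕ∞) (f : ℝ → ℝ) := f.2

lemma continuous (f : SmoothR) : Continuous (f : ℝ → ℝ) := (SmoothR.contDiff f).continuous

lemma differentiable (f : SmoothR) : Differentiable ℝ (f : ℝ → ℝ) :=
  (SmoothR.contDiff f).differentiable (by simp)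

lemma deriv_primitive (f : SmoothR) :
    deriv (fun x => ∫ t in (0 : ℝ)..x, (f : ℝ → ℝ) t) = f :=
  funext fun x => Continuous.deriv_integral _ (SmoothR.continuous f) 0 x

lemma contDiff_primitive (f : SmoothR) :
    ContDiff ℝ (⊤ : ℕ∞) (fun x => ∫ t in (0 : ℝ)..x, (f : ℝ → ℝ) t) := by
  refine contDiff_infty_iff_deriv.mpr ⟨fun x => ?_, ?_⟩
  · exact ((SmoothR.continuous f).integral_hasStrictDerivAt 0 x).hasDerivAt.differentiableAt
  · rw [deriv_primitive]
    exact SmoothR.contDiff f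

end SmoothR

def primitiveLM : Module.End ℝ SmoothR where
  toFun f := ⟨fun x => ∫ t in (0 : ℝ)..x, (f : ℝ → ℝ) t, SmoothR.contDiff_primitive f⟩
  map_add' f g := Subtype.ext <| funext fun _ => intervalIntegral.integral_add
    ((SmoothR.continuous f).intervalIntegrable _ _) ((SmoothR.continuous g).intervalIntegrable _ _)
  map_smul' c _ := Subtype.ext <| funext fun _ => intervalIntegral.integral_smul c _

lemma primitiveLM_apply (f : SmoothR) (x : ℝ) :
    (primitiveLM f : ℝ → ℝ) x = ∫ t in (0 : ℝ)..x, (f : ℝ → ℝ) t := rfl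

lemma deriv_primitiveLM (f : SmoothR) : deriv (primitiveLM f : ℝ → ℝ) = f :=
  SmoothR.deriv_primitive f

lemma derivLM_primitiveLM (f : SmoothR) : derivLM (primitiveLM f) = f :=
  Subtype.ext (deriv_primitiveLM f)

lemma coe_derivLM (f : SmoothR) : (derivLM f : ℝ → ℝ) = deriv (f : ℝ → ℝ) := rfl

lemma primitiveLM_derivLM (f : SmoothR) :
    primitiveLM (derivLM f) = f - (f : ℝ → ℝ) 0 • monomialS 0 := by
  refine Subtype.ext <| funext fun x => ?_
  have hFTC :
      ∫ t in (0 : ℝ)..x, deriv (f : ℝ → ℝ) t = (f : ℝ → ℝ) x - (f : ℝ → ℝ) 0 :=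
    intervalIntegral.integral_deriv_eq_sub
      (fun _ _ => (SmoothR.differentiable f).differentiableAt)
      ((SmoothR.continuous (derivLM f)).intervalIntegrable _ _)
  simpa [primitiveLM_apply, coe_derivLM, monomialS] using hFTC

lemma coe_derivLM_pow (n : ℕ) (f : SmoothR) :
    ((derivLM ^ n) f : ℝ → ℝ) = deriv^[n] (f : ℝ → ℝ) := by
  induction n with
  | zero => rfl
  | succ n ih => rw [pow_succ', Module.End.mul_apply, Function.iterate_succ_apply', ← ih]; rfl

lemma primitiveLM_monomialS (i : ℕ) :
    primitiveLM (monomialS i) = ((i : ℝ) + 1)⁻¹ • monomialS (i + 1) := by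
  refine Subtype.ext <| funext fun x => ?_
  simp [primitiveLM_apply, monomialS, integral_pow, div_eq_inv_mul]

lemma primitiveLM_pow_monomialS (k i : ℕ) :
    (primitiveLM ^ k) (monomialS i) =
      ((i.factorial : ℝ) / (i + k).factorial) • monomialS (i + k) := by
  induction k with
  | zero => simp [Nat.factorial_ne_zero]
  | succ k ih =>
    rw [pow_succ', Module.End.mul_apply, ih, map_smul, primitiveLM_monomialS, smul_smul,
      ← add_assoc, Nat.factorial_succ]
    congr 1
    push_cast
    field_simp

lemma iterate_deriv_primitiveLM_pow {j m : ℕ} (h : j ≤ m) (f : SmoothR) :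
    deriv^[j] ((primitiveLM ^ m) f : ℝ → ℝ) = ((primitiveLM ^ (m - j)) f : ℝ → ℝ) := by
  induction j generalizing m with
  | zero => rfl
  | succ j ih =>
    obtain ⟨m, rfl⟩ : ∃ m', m = m' + 1 := ⟨m - 1, by omega⟩
    rw [Function.iterate_succ_apply, pow_succ', Module.End.mul_apply, deriv_primitiveLM,
      ih (by omega), Nat.add_sub_add_right]

lemma iterate_deriv_primitiveLM_pow_of_le {j m : ℕ} (h : m ≤ j) (f : SmoothR) :
    deriv^[j] ((primitiveLM ^ m) f : ℝ → ℝ) = deriv^[j - m] (f : ℝ → ℝ) := by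
  rw [← Nat.sub_add_cancel h, Function.iterate_add_apply, iterate_deriv_primitiveLM_pow le_rfl,
    Nat.sub_self, Nat.add_sub_cancel]
  rfl

def taylorS (m : ℕ) (f : SmoothR) : SmoothR :=
  ∑ j ∈ Finset.range m, (deriv^[j] (f : ℝ → ℝ) 0 / j.factorial) • monomialS j

lemma primitiveLM_pow_derivLM_pow (m : ℕ) (f : SmoothR) :
    (primitiveLM ^ m) ((derivLM ^ m) f) = f - taylorS m f := by
  induction m with
  | zero => simp [taylorS]
  | succ m ih =>
    rw [pow_succ' derivLM, pow_succ primitiveLM, Module.End.mul_apply, Module.End.mul_apply,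
      primitiveLM_derivLM, map_sub, ih, map_smul, primitiveLM_pow_monomialS, coe_derivLM_pow,
      taylorS, taylorS, Finset.sum_range_succ, smul_smul, sub_sub]
    simp [div_eq_mul_inv]

def polynomialsS : Submodule ℝ SmoothR := Submodule.span ℝ (range monomialS)

lemma taylorS_mem_polynomialsS (m : ℕ) (f : SmoothR) : taylorS m f ∈ polynomialsS :=
  Submodule.sum_mem _ fun j _ => Submodule.smul_mem _ _ (Submodule.subset_span (mem_range_self j))

lemma primitiveLM_pow_mem_polynomialsS (k : ℕ) {f : SmoothR} (hf : f ∈ polynomialsS) :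
    (primitiveLM ^ k) f ∈ polynomialsS := by
  have hle : polynomialsS ≤ polynomialsS.comap (primitiveLM ^ k) := by
    refine Submodule.span_le.mpr (range_subset_iff.mpr fun i => ?_)
    rw [SetLike.mem_coe, Submodule.mem_comap, primitiveLM_pow_monomialS]
    exact Submodule.smul_mem _ _ (Submodule.subset_span (mem_range_self _))
  exact hle hf

lemma exists_mem_polynomialsS_eval (p : Polynomial ℝ) :
    ∃ Q ∈ polynomialsS, ∀ x, (Q : ℝ → ℝ) x = p.eval x := by
  refine ⟨∑ i ∈ Finset.range (p.natDegree + 1), p.coeff i • monomialS i,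
    Submodule.sum_mem _ fun i _ =>
      Submodule.smul_mem _ _ (Submodule.subset_span (mem_range_self i)), fun x => ?_⟩
  simp [Polynomial.eval_eq_sum_range, monomialS]

lemma map_taylorS_eq_zero {T : DistR} {m : ℕ} (h : ∀ k < m, T (monomialS k) = 0)
    (f : SmoothR) : T (taylorS m f) = 0 := by
  rw [taylorS, map_sum]
  exact Finset.sum_eq_zero fun j hj => by rw [map_smul, h j (Finset.mem_range.mp hj), smul_zero]

def IterDerivLE (N : ℕ) (R : ℝ) (f : ℝ → ℝ) (M : ℝ) : Prop :=
  ∀ j ≤ N, ∀ x ∈ Icc (-R) R, |deriv^[j] f x| ≤ M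

namespace IterDerivLE

variable {N N' : ℕ} {R M : ℝ} {f : ℝ → ℝ}

lemma nonneg (h : IterDerivLE N R f M) (hR : 0 ≤ R) : 0 ≤ M :=
  (abs_nonneg _).trans (h 0 N.zero_le 0 ⟨by linarith, hR⟩)

lemma mono (h : IterDerivLE N R f M) (hN : N' ≤ N) : IterDerivLE N' R f M :=
  fun j hj => h j (hj.trans hN)

end IterDerivLE

lemma abs_primitiveLM_pow_le {R M : ℝ} (hR : 0 ≤ R) {f : SmoothR}
    (hf : ∀ x ∈ Icc (-R) R, |(f : ℝ → ℝ) x| ≤ M) (k : ℕ) :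
    ∀ x ∈ Icc (-R) R, |((primitiveLM ^ k) f : ℝ → ℝ) x| ≤ R ^ k * M := by
  have hM : 0 ≤ M := (abs_nonneg _).trans (hf 0 ⟨by linarith, hR⟩)
  induction k with
  | zero => simpa using hf
  | succ k ih =>
    intro x hx
    have hsub : uIoc 0 x ⊆ Icc (-R) R :=
      uIoc_subset_uIcc.trans (uIcc_subset_Icc ⟨by linarith, hR⟩ hx)
    calc |((primitiveLM ^ (k + 1)) f : ℝ → ℝ) x|
        ≤ R ^ k * M * |x - 0| := by
          rw [pow_succ', Module.End.mul_apply, primitiveLM_apply]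
          exact intervalIntegral.norm_integral_le_of_norm_le_const fun t ht =>
            (Real.norm_eq_abs _).le.trans (ih t (hsub ht))
      _ ≤ R ^ k * M * R := by
          rw [sub_zero]
          exact mul_le_mul_of_nonneg_left (abs_le.mpr hx) (by positivity)
      _ = R ^ (k + 1) * M := by ring

lemma IterDerivLE.primitiveLM_pow {N m : ℕ} {R M : ℝ} (hR : 1 ≤ R) {f : SmoothR}
    (h : IterDerivLE (N - m) R f M) : IterDerivLE N R ((primitiveLM ^ m) f) (R ^ m * M) := by
  have hM := h.nonneg (by linarith)
  intro j hj x hx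
  rcases le_total j m with hjm | hmj
  · rw [iterate_deriv_primitiveLM_pow hjm]
    calc _ ≤ R ^ (m - j) * M := abs_primitiveLM_pow_le (by linarith) (h 0 (Nat.zero_le _)) _ x hx
      _ ≤ R ^ m * M := by gcongr; exact Nat.sub_le m j
  · rw [iterate_deriv_primitiveLM_pow_of_le hmj]
    exact (h _ (by omega) x hx).trans (le_mul_of_one_le_left hM (one_le_pow₀ hR))

lemma iterDerivLE_iSup (N : ℕ) (R : ℝ) (f : SmoothR) :
    IterDerivLE N R f
      (⨆ (j : Fin (N + 1)) (x : Icc (-R) R), |iteratedDeriv j (f : ℝ → ℝ) x|) := by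
  intro j hj x hx
  have hbdd (i : ℕ) :
      BddAbove (range fun y : Icc (-R) R => |iteratedDeriv i (f : ℝ → ℝ) y|) :=
    (isCompact_range (((SmoothR.contDiff f).continuous_iteratedDeriv i
      (by exact_mod_cast le_top)).abs.comp continuous_subtype_val)).bddAbove
  rw [← iteratedDeriv_eq_iterate]
  exact (le_ciSup (hbdd j) ⟨x, hx⟩).trans
    (le_ciSup (f := fun i : Fin (N + 1) => ⨆ y : Icc (-R) R, |iteratedDeriv i (f : ℝ → ℝ) y|)
      (finite_range _).bddAbove ⟨j, Nat.lt_succ_of_le hj⟩)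

lemma isCompactDist_iff (T : DistR) :
    IsCompactDist T ↔ ∃ (R C : ℝ) (N : ℕ), 1 ≤ R ∧ 0 < C ∧
      ∀ (f : SmoothR) (M : ℝ), IterDerivLE N R f M → |T f| ≤ C * M := by
  constructor
  · rintro ⟨K, C, N, hK, hT⟩
    obtain ⟨R, hR, hKR⟩ := hK.isBounded.subset_closedBall_lt 1 0
    rw [Real.closedBall_eq_Icc, zero_sub, zero_add] at hKR
    refine ⟨R, max C 1, N, hR.le, by positivity, fun f M hf => ?_⟩
    have hM := hf.nonneg (by linarith)
    have hsup : (⨆ (j : Fin (N + 1)) (x : K), |iteratedDeriv j (f : ℝ → ℝ) x|) ≤ M :=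
      Real.iSup_le (fun j => Real.iSup_le (fun x => by
        simpa [iteratedDeriv_eq_iterate] using hf j (Nat.lt_succ_iff.mp j.2) x (hKR x.2)) hM) hM
    calc |T f| ≤ C * ⨆ (j : Fin (N + 1)) (x : K), |iteratedDeriv j (f : ℝ → ℝ) x| := hT f
      _ ≤ max C 1 * M := by
        gcongr
        exacts [Real.iSup_nonneg fun _ => Real.iSup_nonneg fun _ => abs_nonneg _, le_max_left _ _]
  · rintro ⟨R, C, N, -, -, hT⟩
    exact ⟨Icc (-R) R, C, N, isCompact_Icc, fun f => hT f _ (iterDerivLE_iSup N R f)⟩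

lemma exists_sub_mem_polynomialsS_iterDerivLE (f : SmoothR) (N : ℕ) {R ε : ℝ} (hR : 1 ≤ R)
    (hε : 0 < ε) : ∃ g : SmoothR, f - g ∈ polynomialsS ∧ IterDerivLE N R g ε := by
  have hRN : 0 < R ^ N := by positivity
  obtain ⟨p, hp⟩ := exists_polynomial_near_of_continuousOn (-R) R _
    (SmoothR.continuous ((derivLM ^ N) f)).continuousOn (ε / R ^ N) (by positivity)
  obtain ⟨Q, hQ, hQp⟩ := exists_mem_polynomialsS_eval p
  refine ⟨(primitiveLM ^ N) ((derivLM ^ N) f - Q), ?_, ?_⟩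
  · rw [map_sub, primitiveLM_pow_derivLM_pow, sub_sub, sub_sub_cancel]
    exact add_mem (taylorS_mem_polynomialsS N f) (primitiveLM_pow_mem_polynomialsS N hQ)
  · -- `N - N = 0`: integrating `N` times only needs a bound on `f⁽ᴺ⁾ - Q` itself.
    have hbound : IterDerivLE (N - N) R ((derivLM ^ N) f - Q : SmoothR) (ε / R ^ N) := by
      intro j hj x hx
      obtain rfl : j = 0 := by omega
      have hpx := (hp x hx).le
      rw [abs_sub_comm] at hpx
      simpa [hQp] using hpx
    simpa [mul_div_cancel₀ _ hRN.ne'] using hbound.primitiveLM_pow hR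

lemma eq_zero_of_moments_eq_zero {T : DistR} (hT : IsCompactDist T)
    (h : ∀ k, T (monomialS k) = 0) : T = 0 := by
  obtain ⟨R, C, N, hR, hC, hbound⟩ := (isCompactDist_iff T).mp hT
  have hker : polynomialsS ≤ LinearMap.ker T :=
    Submodule.span_le.mpr (range_subset_iff.mpr h)
  ext f
  refine eq_of_forall_dist_le fun δ hδ => ?_
  obtain ⟨g, hfg, hg⟩ := exists_sub_mem_polynomialsS_iterDerivLE f N hR (div_pos hδ hC)
  have hTfg : T f = T g := sub_eq_zero.mp (by simpa using hker hfg)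
  calc dist (T f) ((0 : DistR) f) = |T g| := by
        rw [Real.dist_eq, hTfg, LinearMap.zero_apply, sub_zero]
    _ ≤ C * (δ / C) := hbound g _ hg
    _ = δ := mul_div_cancel₀ _ hC.ne'

lemma Dop_apply (T : DistR) (f : SmoothR) : Dop T f = -T (derivLM f) := rfl

def DopL : Module.End ℝ DistR where
  toFun := Dop
  map_add' S T := by ext f; exact neg_add _ _
  map_smul' c T := by ext f; exact (mul_neg c _).symm

lemma Dpow_eq_DopL_pow (m : ℕ) : Dpow m = ⇑(DopL ^ m) := (Module.End.coe_pow DopL m).symm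

lemma Dpow_apply (m : ℕ) (T : DistR) (f : SmoothR) :
    Dpow m T f = (-1 : ℝ) ^ m * T ((derivLM ^ m) f) := by
  induction m generalizing f with
  | zero => simp [Dpow]
  | succ m ih =>
    rw [Dpow, Function.iterate_succ_apply', ← Dpow, Dop_apply, ih, pow_succ (-1 : ℝ),
      pow_succ derivLM, Module.End.mul_apply]
    ring

lemma Dop_injective : Function.Injective Dop := fun S T h => by
  ext f
  simpa [Dop_apply, derivLM_primitiveLM] using LinearMap.congr_fun h (primitiveLM f)

lemma Dpow_injective (m : ℕ) : Function.Injective (Dpow m) := Dop_injective.iterate m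

lemma derivLM_compAffine (l h : ℝ) (f : SmoothR) :
    derivLM (compAffine l h f) = l⁻¹ • compAffine l h (derivLM f) := by
  refine Subtype.ext <| funext fun x => ?_
  have hinner : HasDerivAt (fun y : ℝ => (y + h) / l) l⁻¹ x := by
    simpa using ((hasDerivAt_id x).add_const h).div_const l
  exact (((SmoothR.differentiable f) _).hasDerivAt.comp x hinner).deriv.trans (mul_comm _ _)

lemma Dop_affinePullD (l h : ℝ) (T : DistR) :
    Dop (affinePullD l h T) = l • affinePullD l h (Dop T) := by
  ext f
  change -(|l|⁻¹ * T (compAffine l h (derivLM f))) =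
    l * (|l|⁻¹ * -T (derivLM (compAffine l h f)))
  rw [derivLM_compAffine, map_smul, smul_eq_mul]
  rcases eq_or_ne l 0 with rfl | hl
  · simp
  · field_simp

lemma Dpow_affinePullD (m : ℕ) (l h : ℝ) (T : DistR) :
    Dpow m (affinePullD l h T) = l ^ m • affinePullD l h (Dpow m T) := by
  induction m with
  | zero => simp [Dpow]
  | succ m ih =>
    rw [Dpow, Function.iterate_succ_apply', ← Dpow, ih, Function.iterate_succ_apply', ← Dpow,
      show Dop (l ^ m • _) = l ^ m • Dop _ from DopL.map_smul _ _, Dop_affinePullD, smul_smul,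
      pow_succ]

lemma IsRefinable.of_Dpow {p m : ℕ} (hp : p ≠ 0) {T : DistR} (hT : IsRefinable p (Dpow m T)) :
    IsRefinable p T := by
  obtain ⟨s, c, hc⟩ := hT
  have hp' : (p : ℝ) ^ m ≠ 0 := pow_ne_zero m (Nat.cast_ne_zero.mpr hp)
  refine ⟨s, fun j => c j / (p : ℝ) ^ m, Dpow_injective m ?_⟩
  conv_lhs => rw [hc]
  rw [Dpow_eq_DopL_pow, map_sum]
  refine Finset.sum_congr rfl fun j _ => ?_
  rw [map_smul, ← Dpow_eq_DopL_pow, Dpow_affinePullD, smul_smul, div_mul_cancel₀ _ hp']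

lemma TotallyRefinable.of_Dpow {m : ℕ} {T : DistR} (hT : TotallyRefinable (Dpow m T)) :
    TotallyRefinable T :=
  ⟨fun h0 => hT.1 (by rw [h0, Dpow_eq_DopL_pow, map_zero]),
    fun p hp => (hT.2 p hp).of_Dpow (by omega)⟩

/-- The paper's `D⁻ᵐ T`. -/
def antiderivPow (m : ℕ) (T : DistR) : DistR := (-1 : ℝ) ^ m • (T ∘ₗ primitiveLM ^ m)

lemma antiderivPow_apply (m : ℕ) (T : DistR) (f : SmoothR) :
    antiderivPow m T f = (-1 : ℝ) ^ m * T ((primitiveLM ^ m) f) := rfl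

lemma Dpow_antiderivPow {m : ℕ} {T : DistR} (h : ∀ k < m, T (monomialS k) = 0) :
    Dpow m (antiderivPow m T) = T := by
  ext f
  rw [Dpow_apply, antiderivPow_apply, ← mul_assoc, ← mul_pow, neg_one_mul, neg_neg, one_pow,
    one_mul, primitiveLM_pow_derivLM_pow, map_sub, map_taylorS_eq_zero h, sub_zero]

lemma antiderivPow_monomialS_zero (m : ℕ) (T : DistR) :
    antiderivPow m T (monomialS 0) = (-1 : ℝ) ^ m / m.factorial * T (monomialS m) := by
  rw [antiderivPow_apply, primitiveLM_pow_monomialS, map_smul, smul_eq_mul, zero_add,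
    Nat.factorial_zero, Nat.cast_one]
  ring

lemma IsCompactDist.antiderivPow {T : DistR} (hT : IsCompactDist T) (m : ℕ) :
    IsCompactDist (antiderivPow m T) := by
  obtain ⟨R, C, N, hR, hC, hbound⟩ := (isCompactDist_iff T).mp hT
  refine (isCompactDist_iff _).mpr ⟨R, C * R ^ m, N, hR, by positivity, fun f M hf => ?_⟩
  rw [antiderivPow_apply, abs_mul, abs_pow, abs_neg, abs_one, one_pow, one_mul, mul_assoc]
  exact hbound _ _ ((hf.mono (Nat.sub_le N m)).primitiveLM_pow hR)

/-- Every totally refinable compactly supported distribution `φ` can be written as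
`φ = D^m ψ` with `ψ` totally refinable, compactly supported and `ψ(1) ≠ 0`. -/
theorem totally_refinable_eq_derivative (φ : DistR) (hφc : IsCompactDist φ)
    (hφt : TotallyRefinable φ) :
    ∃ (m : ℕ) (ψ : DistR), IsCompactDist ψ ∧ TotallyRefinable ψ ∧
      ψ (monomialS 0) ≠ 0 ∧ Dpow m ψ = φ := by
  classical
  have hmoment : ∃ k, φ (monomialS k) ≠ 0 := by
    by_contra! h
    exact hφt.1 (eq_zero_of_moments_eq_zero hφc h)
  set m := Nat.find hmoment
  have hD : Dpow m (antiderivPow m φ) = φ :=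
    Dpow_antiderivPow fun k hk => not_not.mp (Nat.find_min hmoment hk)
  refine ⟨m, antiderivPow m φ, hφc.antiderivPow m, TotallyRefinable.of_Dpow (hD ▸ hφt), ?_,
    hD⟩
  rw [antiderivPow_monomialS_zero]
  exact mul_ne_zero (div_ne_zero (pow_ne_zero m (by norm_num)) (by positivity))
    (Nat.find_spec hmoment)

end
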